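/- arXiv:2505.22493 — 5 statements merged into one kernel-verified Lean document; each statement's English description precedes it below -/
import Mathlib

section
/- Fix $d \ge 1$ and $H_1,\dots,H_d \in (0,1)$. The integral $\int_{\mathbb{R}^d} \frac{\prod_{j=1}^d |\xi_j|^{1-2H_j}}{1+|\xi|^2}\, d\xi$ is finite if and only if $\sum_{j=1}^d H_j > d-1$. -/
open MeasureTheory Real Set
open scoped ENNReal

lemma aux_integrable_abs_rpow_exp {t α : ℝ} (ht : 0 < t) (hα : -1 < α) :
    Integrable (fun x : ℝ => |x| ^ α * Real.exp (-t * x ^ 2)) := by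
  have h1 : IntegrableOn (fun x : ℝ => |x| ^ α * Real.exp (-t * x ^ 2)) (Ioi 0) := by
    refine (integrableOn_rpow_mul_exp_neg_mul_sq ht hα).congr_fun
      (fun x hx => ?_) measurableSet_Ioi
    rw [abs_of_pos hx]
  have h2 : IntegrableOn (fun x : ℝ => |x| ^ α * Real.exp (-t * x ^ 2)) (Iic 0) := by
    rw [← Measure.map_neg_eq_self (volume : Measure ℝ)]
    have m : MeasurableEmbedding fun x : ℝ => -x := (Homeomorph.neg ℝ).measurableEmbedding
    rw [m.integrableOn_map_iff]
    simp_rw [Function.comp_def, abs_neg, neg_sq, neg_preimage, neg_Iic, neg_zero]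
    exact Iff.mpr integrableOn_Ici_iff_integrableOn_Ioi h1
  rw [← integrableOn_univ, ← Iic_union_Ioi (a := (0 : ℝ)), integrableOn_union]
  exact ⟨h2, h1⟩

lemma aux_integral_abs_rpow_exp {t α : ℝ} (ht : 0 < t) (hα : -1 < α) :
    ∫ x : ℝ, |x| ^ α * Real.exp (-t * x ^ 2)
      = t ^ (-(α + 1) / 2) * Real.Gamma ((α + 1) / 2) := by
  have h : (fun x : ℝ => |x| ^ α * Real.exp (-t * x ^ 2))
      = fun x : ℝ => (fun y : ℝ => y ^ α * Real.exp (-t * y ^ 2)) |x| := by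
    funext x; simp [sq_abs]
  rw [h, integral_comp_abs (f := fun y : ℝ => y ^ α * Real.exp (-t * y ^ 2))]
  have h2 : ∫ x in Ioi (0 : ℝ), x ^ α * Real.exp (-t * x ^ 2)
      = ∫ x in Ioi (0 : ℝ), x ^ α * Real.exp (-t * x ^ (2 : ℝ)) := by
    refine setIntegral_congr_fun measurableSet_Ioi (fun x hx => ?_)
    rw [← Real.rpow_natCast x 2]
    norm_num
  rw [h2, integral_rpow_mul_exp_neg_mul_rpow two_pos hα ht]
  ring

lemma aux_exp_integral {a : ℝ} (ha : 0 < a) :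
    ∫ t in Ioi (0 : ℝ), Real.exp (-a * t) = a⁻¹ := by
  have h : ∫ t in Ioi (0 : ℝ), Real.exp (-a * t)
      = ∫ t in Ioi (0 : ℝ), Real.exp (-a * t ^ (1 : ℝ)) := by
    simp [Real.rpow_one]
  rw [h, integral_exp_neg_mul_rpow zero_lt_one ha]
  norm_num [Real.rpow_neg_one, Real.Gamma_two]

lemma aux_exp_rep {c a : ℝ} (hc : 0 ≤ c) (ha : 0 < a) :
    ENNReal.ofReal (c / a)
      = ∫⁻ t in Ioi (0 : ℝ), ENNReal.ofReal (c * Real.exp (-a * t)) := by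
  rw [← ofReal_integral_eq_lintegral_ofReal ((exp_neg_integrableOn_Ioi 0 ha).const_mul c)
    (Filter.Eventually.of_forall fun t => by positivity)]
  rw [integral_const_mul, aux_exp_integral ha, div_eq_mul_inv]

lemma aux_tail (β : ℝ) :
    (∫⁻ t in Ioi (0 : ℝ), ENNReal.ofReal (Real.exp (-t) * t ^ (-β))) < ⊤ ↔ β < 1 := by
  constructor
  · intro h
    by_contra hβ
    push_neg at hβ
    have hinv : ¬ IntegrableOn (fun t : ℝ => t⁻¹) (Ioo (0 : ℝ) 1) := by
      intro hI
      have h2 : IntegrableOn (fun t : ℝ => t ^ (-1 : ℝ)) (Ioo (0 : ℝ) 1) :=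
        hI.congr_fun (fun x _ => (Real.rpow_neg_one x).symm) measurableSet_Ioo
      rw [intervalIntegral.integrableOn_Ioo_rpow_iff zero_lt_one] at h2
      linarith
    have hA : (∫⁻ t in Ioo (0 : ℝ) 1, ENNReal.ofReal t⁻¹) = ⊤ := by
      by_contra hfin
      apply hinv
      refine ⟨measurable_inv.aestronglyMeasurable, ?_⟩
      have heq : ∫⁻ t in Ioo (0 : ℝ) 1, ‖t⁻¹‖ₑ
          = ∫⁻ t in Ioo (0 : ℝ) 1, ENNReal.ofReal t⁻¹ := by
        refine setLIntegral_congr_fun_ae measurableSet_Ioo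
          (Filter.Eventually.of_forall fun t ht => ?_)
        exact Real.enorm_eq_ofReal (inv_nonneg.2 ht.1.le)
      rw [HasFiniteIntegral, heq]
      exact lt_top_iff_ne_top.mpr hfin
    have hB : (∫⁻ t in Ioo (0 : ℝ) 1, ENNReal.ofReal (Real.exp (-1) * t⁻¹)) = ⊤ := by
      simp_rw [ENNReal.ofReal_mul (Real.exp_pos (-1)).le]
      rw [lintegral_const_mul' _ _ ENNReal.ofReal_ne_top, hA,
        ENNReal.mul_top ((ENNReal.ofReal_pos.mpr (Real.exp_pos _)).ne')]
    have hmono : (∫⁻ t in Ioo (0 : ℝ) 1, ENNReal.ofReal (Real.exp (-1) * t⁻¹))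
        ≤ ∫⁻ t in Ioi (0 : ℝ), ENNReal.ofReal (Real.exp (-t) * t ^ (-β)) := by
      refine le_trans (setLIntegral_mono ?_ ?_) (lintegral_mono_set Ioo_subset_Ioi_self)
      · exact ((measurable_id.neg.exp).mul (measurable_id.pow measurable_const)).ennreal_ofReal
      · intro x hx
        refine ENNReal.ofReal_le_ofReal (mul_le_mul ?_ ?_ (inv_nonneg.2 hx.1.le)
          (Real.exp_pos _).le)
        · exact Real.exp_le_exp.2 (by linarith [hx.2])
        · rw [← Real.rpow_neg_one x]
          exact Real.rpow_le_rpow_of_exponent_ge hx.1 hx.2.le (by linarith)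
    rw [hB] at hmono
    exact h.ne (top_le_iff.mp hmono)
  · intro hβ
    have h := Real.GammaIntegral_convergent (s := 1 - β) (by linarith)
    have he : (1 : ℝ) - β - 1 = -β := by ring
    rw [he] at h
    exact h.lintegral_lt_top

theorem stmt_4 (d : ℕ) (hd : 1 ≤ d) (H : Fin d → ℝ)
    (hH : ∀ j, H j ∈ Set.Ioo (0:ℝ) 1) :
    (∫⁻ ξ : EuclideanSpace ℝ (Fin d),
        ENNReal.ofReal ((∏ j, |ξ j| ^ (1 - 2 * H j)) / (1 + ‖ξ‖ ^ 2))) < ⊤ ↔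
      (d : ℝ) - 1 < ∑ j, H j := by
  set G : ℝ := ∏ j, Real.Gamma (1 - H j) with hG
  have hGpos : 0 < G := Finset.prod_pos fun j _ => Real.Gamma_pos_of_pos (by linarith [(hH j).2])
  set β : ℝ := ∑ j, (1 - H j) with hβdef
  -- the kernel function
  set F : (Fin d → ℝ) → ℝ → ℝ≥0∞ := fun x t =>
    ENNReal.ofReal (Real.exp (-t) * ∏ j, (|x j| ^ (1 - 2 * H j) * Real.exp (-t * (x j) ^ 2)))
    with hF
  have hmF : Measurable (Function.uncurry F) := by
    apply Measurable.ennreal_ofReal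
    refine Measurable.mul (measurable_snd.neg.exp) ?_
    refine Finset.measurable_prod _ fun j _ => Measurable.mul ?_ ?_
    · exact (((measurable_pi_apply j).comp measurable_fst).abs).pow measurable_const
    · exact (measurable_snd.neg.mul
        (((measurable_pi_apply j).comp measurable_fst).pow measurable_const)).exp
  have hA : (∫⁻ ξ : EuclideanSpace ℝ (Fin d),
        ENNReal.ofReal ((∏ j, |ξ j| ^ (1 - 2 * H j)) / (1 + ‖ξ‖ ^ 2)))
      = ∫⁻ x : Fin d → ℝ,
          ENNReal.ofReal ((∏ j, |x j| ^ (1 - 2 * H j)) / (1 + ∑ j, (x j) ^ 2)) := by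
    rw [← ((EuclideanSpace.volume_preserving_symm_measurableEquiv_toLp (Fin d)).symm).lintegral_comp_emb
      (MeasurableEquiv.measurableEmbedding _)]
    refine lintegral_congr fun x => ?_
    have h2 : ‖(MeasurableEquiv.toLp 2 (Fin d → ℝ)).symm.symm x‖ ^ 2 = ∑ j, (x j) ^ 2 := by
      rw [EuclideanSpace.norm_eq, Real.sq_sqrt (by positivity)]
      refine Finset.sum_congr rfl fun j _ => ?_
      rw [Real.norm_eq_abs, sq_abs]
      rfl
    have hcoord : ∀ j, (MeasurableEquiv.toLp 2 (Fin d → ℝ)).symm.symm x j = x j := fun j => rfl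
    rw [h2]
    simp only [hcoord]
  have hB : ∀ x : Fin d → ℝ,
      ENNReal.ofReal ((∏ j, |x j| ^ (1 - 2 * H j)) / (1 + ∑ j, (x j) ^ 2))
        = ∫⁻ t in Ioi (0 : ℝ), F x t := by
    intro x
    have hP : 0 ≤ ∏ j, |x j| ^ (1 - 2 * H j) :=
      Finset.prod_nonneg fun j _ => Real.rpow_nonneg (abs_nonneg _) _
    have hS : (0 : ℝ) < 1 + ∑ j, (x j) ^ 2 := by positivity
    rw [aux_exp_rep hP hS]
    refine setLIntegral_congr_fun_ae measurableSet_Ioi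
      (Filter.Eventually.of_forall fun t ht => ?_)
    rw [hF]
    congr 1
    rw [Finset.prod_mul_distrib, ← Real.exp_sum]
    have hs : ∑ j, (-t * (x j) ^ 2) = -t * ∑ j, (x j) ^ 2 := by rw [Finset.mul_sum]
    have harg : -(1 + ∑ j, (x j) ^ 2) * t = -t + -t * ∑ j, (x j) ^ 2 := by ring
    rw [hs, harg, Real.exp_add]
    ring
  have hcalc : (∫⁻ ξ : EuclideanSpace ℝ (Fin d),
        ENNReal.ofReal ((∏ j, |ξ j| ^ (1 - 2 * H j)) / (1 + ‖ξ‖ ^ 2)))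
      = ENNReal.ofReal G * ∫⁻ t in Ioi (0 : ℝ),
          ENNReal.ofReal (Real.exp (-t) * t ^ (-β)) := by
    calc (∫⁻ ξ : EuclideanSpace ℝ (Fin d),
        ENNReal.ofReal ((∏ j, |ξ j| ^ (1 - 2 * H j)) / (1 + ‖ξ‖ ^ 2)))
        = ∫⁻ x : Fin d → ℝ, ∫⁻ t in Ioi (0 : ℝ), F x t := by
          rw [hA]; exact lintegral_congr hB
      _ = ∫⁻ t in Ioi (0 : ℝ), ∫⁻ x : Fin d → ℝ, F x t :=
          lintegral_lintegral_swap hmF.aemeasurable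
      _ = ∫⁻ t in Ioi (0 : ℝ), ENNReal.ofReal (Real.exp (-t) * (t ^ (-β) * G)) := by
          refine setLIntegral_congr_fun_ae measurableSet_Ioi
            (Filter.Eventually.of_forall fun t ht => ?_)
          have ht : (0 : ℝ) < t := ht
          have hint : ∀ j : Fin d,
              Integrable (fun y : ℝ => |y| ^ (1 - 2 * H j) * Real.exp (-t * y ^ 2)) :=
            fun j => aux_integrable_abs_rpow_exp ht (by linarith [(hH j).2])
          have hprod : Integrable (fun x : Fin d → ℝ =>
              ∏ j, |x j| ^ (1 - 2 * H j) * Real.exp (-t * (x j) ^ 2)) :=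
            Integrable.fintype_prod (𝕜 := ℝ)
              (f := fun j y => |y| ^ (1 - 2 * H j) * Real.exp (-t * y ^ 2)) hint
          rw [hF]
          rw [← ofReal_integral_eq_lintegral_ofReal (hprod.const_mul _)
            (Filter.Eventually.of_forall fun x => by positivity)]
          congr 1
          rw [integral_const_mul, volume_pi, integral_fintype_prod_eq_prod (ι := Fin d)
            (f := fun j y => |y| ^ (1 - 2 * H j) * Real.exp (-t * y ^ 2))]
          congr 1
          have hone : ∀ j : Fin d, ∫ y : ℝ, |y| ^ (1 - 2 * H j) * Real.exp (-t * y ^ 2)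
              = t ^ (-(1 - H j)) * Real.Gamma (1 - H j) := by
            intro j
            rw [aux_integral_abs_rpow_exp ht (by linarith [(hH j).2])]
            have e1 : -((1 - 2 * H j) + 1) / 2 = -(1 - H j) := by ring
            have e2 : ((1 - 2 * H j) + 1) / 2 = 1 - H j := by ring
            rw [e1, e2]
          rw [Finset.prod_congr rfl fun j _ => hone j, Finset.prod_mul_distrib,
            ← Real.rpow_sum_of_pos ht, hG]
          congr 2
          rw [hβdef, ← Finset.sum_neg_distrib]
      _ = ENNReal.ofReal G * ∫⁻ t in Ioi (0 : ℝ),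
            ENNReal.ofReal (Real.exp (-t) * t ^ (-β)) := by
          rw [← lintegral_const_mul' _ _ ENNReal.ofReal_ne_top]
          refine setLIntegral_congr_fun_ae measurableSet_Ioi
            (Filter.Eventually.of_forall fun t ht => ?_)
          rw [← ENNReal.ofReal_mul hGpos.le]
          congr 1
          ring
  have hβiff : β < 1 ↔ (d : ℝ) - 1 < ∑ j, H j := by
    have hβval : β = (d : ℝ) - ∑ j, H j := by
      rw [hβdef, Finset.sum_sub_distrib, Finset.sum_const, Finset.card_univ, Fintype.card_fin,
        nsmul_eq_mul, mul_one]
    rw [hβval]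
    constructor <;> intro <;> linarith
  rw [hcalc, ENNReal.mul_lt_top_iff]
  constructor
  · rintro (⟨-, hJ⟩ | hG0 | hJ0)
    · exact hβiff.mp ((aux_tail β).mp hJ)
    · exact absurd hG0 (ENNReal.ofReal_pos.mpr hGpos).ne'
    · exact hβiff.mp ((aux_tail β).mp (by rw [hJ0]; simp))
  · intro h
    exact Or.inl ⟨ENNReal.ofReal_lt_top, (aux_tail β).mpr (hβiff.mpr h)⟩
end

section
/- Let $\mu$ be a non-negative Borel measure on $\mathbb{R}^d$, $q \in (0,2)$, and $T>0$. Suppose $\sup_{h\in(0,1]} h^q\,\mu(\{|\xi|\le 1/h\}) \le C_1$ and $\int_{\{|\xi|>1\}} |\xi|^{-q}\,\mu(d\xi) \le C_2$. Then there is a constant $C$ (depending on $T,C_1,C_2,q$) such that for all $h \in \mathbb{R}^d$ with $0 < |h| < 1$: $2\int_0^T\int_{\mathbb{R}^d}\big(1-\cos\langle \xi,h\rangle\big)\frac{\sin^2(s|\xi|)}{|\xi|^2}\,\mu(d\xi)\,ds \le C |h|^{2-q}$. -/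
open MeasureTheory

theorem stmt_12 (d : ℕ) (μ : Measure (EuclideanSpace ℝ (Fin d)))
    (q T C1 C2 : ℝ) (hq0 : 0 < q) (hq2 : q < 2) (hT : 0 < T)
    (ha : ∀ h ∈ Set.Ioc (0:ℝ) 1,
      ENNReal.ofReal (h ^ q) * μ {ξ | ‖ξ‖ ≤ 1 / h} ≤ ENNReal.ofReal C1)
    (hb : ∫⁻ ξ in {ξ : EuclideanSpace ℝ (Fin d) | 1 < ‖ξ‖},
      ENNReal.ofReal (‖ξ‖ ^ (-q)) ∂μ ≤ ENNReal.ofReal C2) :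
    ∃ C : ℝ, ∀ z : EuclideanSpace ℝ (Fin d), 0 < ‖z‖ → ‖z‖ < 1 →
      2 * ∫⁻ s in Set.Ioc (0:ℝ) T,
          ∫⁻ ξ, ENNReal.ofReal
            ((1 - Real.cos ((inner ℝ ξ z : ℝ))) * (Real.sin (s * ‖ξ‖)) ^ 2 / ‖ξ‖ ^ 2) ∂μ
        ≤ ENNReal.ofReal (C * ‖z‖ ^ (2 - q)) := by
  set K : ℝ := max C1 0 / 2 + 2 * max C2 0 with hKdef
  have hK0 : 0 ≤ K := by positivity
  refine ⟨2 * T * K, fun z hz0 hz1 => ?_⟩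
  set r : ℝ := ‖z‖ with hrdef
  set A : Set (EuclideanSpace ℝ (Fin d)) := {ξ | ‖ξ‖ ≤ 1 / r} with hAdef
  have hAmeas : MeasurableSet A :=
    measurableSet_le (measurable_norm) measurable_const
  have hr2q : (0:ℝ) ≤ r ^ (2 - q) := Real.rpow_nonneg hz0.le _
  -- inner bound, uniform in s
  have hinner : ∀ s : ℝ,
      ∫⁻ ξ, ENNReal.ofReal
        ((1 - Real.cos ((inner ℝ ξ z : ℝ))) * (Real.sin (s * ‖ξ‖)) ^ 2 / ‖ξ‖ ^ 2) ∂μ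
      ≤ ENNReal.ofReal (K * r ^ (2 - q)) := by
    intro s
    rw [← lintegral_add_compl _ hAmeas]
    have hlow : ∫⁻ ξ in A, ENNReal.ofReal
        ((1 - Real.cos ((inner ℝ ξ z : ℝ))) * (Real.sin (s * ‖ξ‖)) ^ 2 / ‖ξ‖ ^ 2) ∂μ
        ≤ ENNReal.ofReal (r ^ (2 - q) * (max C1 0 / 2)) := by
      have hpt : ∀ ξ : EuclideanSpace ℝ (Fin d),
          (1 - Real.cos ((inner ℝ ξ z : ℝ))) * (Real.sin (s * ‖ξ‖)) ^ 2 / ‖ξ‖ ^ 2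
            ≤ r ^ 2 / 2 := by
        intro ξ
        rcases eq_or_lt_of_le (norm_nonneg ξ) with h0 | h0
        · have hz : (1 - Real.cos ((inner ℝ ξ z : ℝ))) * (Real.sin (s * ‖ξ‖)) ^ 2 / ‖ξ‖ ^ 2
              = 0 := by rw [← h0]; simp
          rw [hz]; positivity
        · rw [div_le_iff₀ (by positivity : (0:ℝ) < ‖ξ‖ ^ 2)]
          have h1 := Real.cos_le_one ((inner ℝ ξ z : ℝ))
          have h2 := Real.one_sub_sq_div_two_le_cos (x := ((inner ℝ ξ z : ℝ)))
          have h3 := Real.sin_sq_le_one (s * ‖ξ‖)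
          have h4 : (0:ℝ) ≤ (Real.sin (s * ‖ξ‖)) ^ 2 := sq_nonneg _
          have h5 := abs_real_inner_le_norm ξ z
          have h6 : ((inner ℝ ξ z : ℝ)) ^ 2 ≤ (‖ξ‖ * r) ^ 2 := by
            rw [← sq_abs]
            exact pow_le_pow_left₀ (abs_nonneg _) h5 2
          nlinarith
      calc ∫⁻ ξ in A, ENNReal.ofReal
            ((1 - Real.cos ((inner ℝ ξ z : ℝ))) * (Real.sin (s * ‖ξ‖)) ^ 2 / ‖ξ‖ ^ 2) ∂μ
          ≤ ∫⁻ _ in A, ENNReal.ofReal (r ^ 2 / 2) ∂μ :=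
            lintegral_mono fun ξ => ENNReal.ofReal_le_ofReal (hpt ξ)
        _ = ENNReal.ofReal (r ^ 2 / 2) * μ A := setLIntegral_const _ _
        _ = ENNReal.ofReal (r ^ (2 - q) / 2) * (ENNReal.ofReal (r ^ q) * μ A) := by
            rw [← mul_assoc, ← ENNReal.ofReal_mul (by positivity)]
            congr 2
            rw [div_mul_eq_mul_div, ← Real.rpow_add hz0, sub_add_cancel]
            norm_num [Real.rpow_two]
        _ ≤ ENNReal.ofReal (r ^ (2 - q) / 2) * ENNReal.ofReal C1 :=
            mul_le_mul_right (ha r ⟨hz0, hz1.le⟩) _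
        _ ≤ ENNReal.ofReal (r ^ (2 - q) * (max C1 0 / 2)) := by
            rw [← ENNReal.ofReal_mul (by positivity)]
            apply ENNReal.ofReal_le_ofReal
            have : C1 ≤ max C1 0 := le_max_left _ _
            nlinarith
    have hhigh : ∫⁻ ξ in Aᶜ, ENNReal.ofReal
        ((1 - Real.cos ((inner ℝ ξ z : ℝ))) * (Real.sin (s * ‖ξ‖)) ^ 2 / ‖ξ‖ ^ 2) ∂μ
        ≤ ENNReal.ofReal (r ^ (2 - q) * (2 * max C2 0)) := by
      have hsub : Aᶜ ⊆ {ξ : EuclideanSpace ℝ (Fin d) | 1 < ‖ξ‖} := by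
        intro ξ hξ
        simp only [hAdef, Set.mem_compl_iff, Set.mem_setOf_eq, not_le] at hξ ⊢
        have : (1:ℝ) < 1 / r := by rw [lt_div_iff₀ hz0]; linarith
        linarith
      have hpt : ∀ ξ ∈ Aᶜ,
          (1 - Real.cos ((inner ℝ ξ z : ℝ))) * (Real.sin (s * ‖ξ‖)) ^ 2 / ‖ξ‖ ^ 2
            ≤ 2 * r ^ (2 - q) * ‖ξ‖ ^ (-q) := by
        intro ξ hξ
        simp only [hAdef, Set.mem_compl_iff, Set.mem_setOf_eq, not_le] at hξ
        have hξ0 : (0:ℝ) < ‖ξ‖ := lt_trans (by positivity) hξ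
        have hnum : (1 - Real.cos ((inner ℝ ξ z : ℝ))) * (Real.sin (s * ‖ξ‖)) ^ 2 ≤ 2 := by
          have h1 := Real.neg_one_le_cos ((inner ℝ ξ z : ℝ))
          have h2 := Real.cos_le_one ((inner ℝ ξ z : ℝ))
          have h3 := Real.sin_sq_le_one (s * ‖ξ‖)
          have h4 : (0:ℝ) ≤ (Real.sin (s * ‖ξ‖)) ^ 2 := sq_nonneg _
          nlinarith
        have step1 : (1 - Real.cos ((inner ℝ ξ z : ℝ))) * (Real.sin (s * ‖ξ‖)) ^ 2 / ‖ξ‖ ^ 2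
            ≤ 2 / ‖ξ‖ ^ 2 :=
          div_le_div_of_nonneg_right hnum (by positivity)
        refine step1.trans ?_
        have hpow : (2:ℝ) / ‖ξ‖ ^ 2 = 2 * (‖ξ‖ ^ (-q) * ‖ξ‖ ^ (q - 2)) := by
          rw [← Real.rpow_add hξ0]
          have : -q + (q - 2) = -(2:ℝ) := by ring
          rw [this, Real.rpow_neg hξ0.le, Real.rpow_two, div_eq_mul_inv]
        rw [hpow]
        have h1 : (1 / r) ^ (q - 2) = r ^ (2 - q) := by
          rw [one_div, Real.inv_rpow hz0.le, ← Real.rpow_neg hz0.le, neg_sub]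
        have hmono : ‖ξ‖ ^ (q - 2) ≤ r ^ (2 - q) :=
          (Real.rpow_le_rpow_of_nonpos (by positivity) hξ.le (by linarith)).trans_eq h1
        have hnq : (0:ℝ) ≤ ‖ξ‖ ^ (-q) := Real.rpow_nonneg hξ0.le _
        nlinarith
      calc ∫⁻ ξ in Aᶜ, ENNReal.ofReal
            ((1 - Real.cos ((inner ℝ ξ z : ℝ))) * (Real.sin (s * ‖ξ‖)) ^ 2 / ‖ξ‖ ^ 2) ∂μ
          ≤ ∫⁻ ξ in Aᶜ, ENNReal.ofReal (2 * r ^ (2 - q)) * ENNReal.ofReal (‖ξ‖ ^ (-q)) ∂μ := by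
            refine setLIntegral_mono ?_ fun ξ hξ => ?_
            · exact measurable_const.mul
                (ENNReal.measurable_ofReal.comp (measurable_norm.pow measurable_const))
            · rw [← ENNReal.ofReal_mul (by positivity)]
              exact ENNReal.ofReal_le_ofReal (hpt ξ hξ)
        _ = ENNReal.ofReal (2 * r ^ (2 - q)) *
              ∫⁻ ξ in Aᶜ, ENNReal.ofReal (‖ξ‖ ^ (-q)) ∂μ :=
            lintegral_const_mul' _ _ ENNReal.ofReal_ne_top
        _ ≤ ENNReal.ofReal (2 * r ^ (2 - q)) *
              ∫⁻ ξ in {ξ : EuclideanSpace ℝ (Fin d) | 1 < ‖ξ‖},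
                ENNReal.ofReal (‖ξ‖ ^ (-q)) ∂μ :=
            mul_le_mul_right (lintegral_mono_set hsub) _
        _ ≤ ENNReal.ofReal (2 * r ^ (2 - q)) * ENNReal.ofReal C2 :=
            mul_le_mul_right hb _
        _ ≤ ENNReal.ofReal (r ^ (2 - q) * (2 * max C2 0)) := by
            rw [← ENNReal.ofReal_mul (by positivity)]
            apply ENNReal.ofReal_le_ofReal
            have : C2 ≤ max C2 0 := le_max_left _ _
            nlinarith
    calc _ ≤ ENNReal.ofReal (r ^ (2 - q) * (max C1 0 / 2)) +
            ENNReal.ofReal (r ^ (2 - q) * (2 * max C2 0)) := add_le_add hlow hhigh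
      _ = ENNReal.ofReal (K * r ^ (2 - q)) := by
          rw [← ENNReal.ofReal_add (by positivity) (by positivity)]
          congr 1
          rw [hKdef]; ring
  calc 2 * ∫⁻ s in Set.Ioc (0:ℝ) T,
          ∫⁻ ξ, ENNReal.ofReal
            ((1 - Real.cos ((inner ℝ ξ z : ℝ))) * (Real.sin (s * ‖ξ‖)) ^ 2 / ‖ξ‖ ^ 2) ∂μ
      ≤ 2 * ∫⁻ _ in Set.Ioc (0:ℝ) T, ENNReal.ofReal (K * r ^ (2 - q)) :=
        mul_le_mul_right (lintegral_mono fun s => hinner s) _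
    _ = 2 * (ENNReal.ofReal (K * r ^ (2 - q)) * ENNReal.ofReal T) := by
        rw [setLIntegral_const, Real.volume_Ioc, sub_zero]
    _ ≤ ENNReal.ofReal (2 * T * K * r ^ (2 - q)) := by
        rw [← ENNReal.ofReal_ofNat, ← ENNReal.ofReal_mul (by positivity),
          ← ENNReal.ofReal_mul (by norm_num)]
        apply le_of_eq
        ring
end

section
/- Let $\mu$ be a non-negative Borel measure on $\mathbb{R}^d$ and $q \in (0,2)$ with $\mu(\{|\xi|\le 1/h\}) \le C_1 h^{-q}$ for all $h \in (0,1]$ and $\int_{\{|\xi|>1\}}|\xi|^{-q}\,\mu(d\xi) \le C_2$. Then there is a constant $C$ with $\int_{\mathbb{R}^d} \frac{1 - e^{-h|\xi|^2}}{|\xi|^2}\, \mu(d\xi) \le C\, h^{1-q/2}$ for all $h \in (0,1]$. -/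
open MeasureTheory

theorem stmt_13 (d : ℕ) (μ : Measure (EuclideanSpace ℝ (Fin d)))
    (q C1 C2 : ℝ) (hq0 : 0 < q) (hq2 : q < 2)
    (ha : ∀ h ∈ Set.Ioc (0:ℝ) 1, μ {ξ | ‖ξ‖ ≤ 1 / h} ≤ ENNReal.ofReal (C1 * h ^ (-q)))
    (hb : ∫⁻ ξ in {ξ : EuclideanSpace ℝ (Fin d) | 1 < ‖ξ‖},
      ENNReal.ofReal (‖ξ‖ ^ (-q)) ∂μ ≤ ENNReal.ofReal C2) :
    ∃ C : ℝ, ∀ h ∈ Set.Ioc (0:ℝ) 1,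
      (∫⁻ ξ, ENNReal.ofReal ((1 - Real.exp (-h * ‖ξ‖ ^ 2)) / ‖ξ‖ ^ 2) ∂μ)
        ≤ ENNReal.ofReal (C * h ^ (1 - q / 2)) := by
  refine ⟨max C1 0 + max C2 0, ?_⟩
  rintro h ⟨hpos, h1⟩
  set s : ℝ := Real.sqrt h with hs_def
  have hs0 : 0 < s := Real.sqrt_pos.mpr hpos
  have hs1 : s ≤ 1 := by
    rw [hs_def, show (1:ℝ) = Real.sqrt 1 by simp]
    exact Real.sqrt_le_sqrt h1
  have hp0 : (0:ℝ) ≤ h ^ (1 - q / 2) := Real.rpow_nonneg hpos.le _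
  -- key exponent computations
  have hs_eq : s = h ^ ((1:ℝ)/2) := by rw [hs_def, Real.sqrt_eq_rpow]
  have hs_rpow : s ^ (-q) = h ^ (-(q / 2)) := by
    rw [hs_eq, ← Real.rpow_mul hpos.le]
    congr 1; ring
  have hhs : h * h ^ (-(q / 2)) = h ^ (1 - q / 2) := by
    nth_rewrite 1 [show h = h ^ (1:ℝ) from (Real.rpow_one h).symm]
    rw [← Real.rpow_add hpos]
    ring_nf
  set A : Set (EuclideanSpace ℝ (Fin d)) := {ξ | ‖ξ‖ ≤ 1 / s} with hA_def
  have mA : MeasurableSet A := measurableSet_le measurable_norm measurable_const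
  set f : EuclideanSpace ℝ (Fin d) → ENNReal :=
    fun ξ => ENNReal.ofReal ((1 - Real.exp (-h * ‖ξ‖ ^ 2)) / ‖ξ‖ ^ 2) with hf_def
  -- bound on A
  have hA : ∫⁻ ξ in A, f ξ ∂μ ≤ ENNReal.ofReal (max C1 0 * h ^ (1 - q / 2)) := by
    have hptw : ∀ ξ : EuclideanSpace ℝ (Fin d), f ξ ≤ ENNReal.ofReal h := by
      intro ξ
      apply ENNReal.ofReal_le_ofReal
      rcases eq_or_lt_of_le (norm_nonneg ξ) with hz | hz
      · rw [← hz]; simp [hpos.le]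
      · rw [div_le_iff₀ (by positivity)]
        have := Real.add_one_le_exp (-h * ‖ξ‖ ^ 2)
        linarith
    calc ∫⁻ ξ in A, f ξ ∂μ ≤ ∫⁻ _ in A, ENNReal.ofReal h ∂μ :=
          lintegral_mono fun ξ => hptw ξ
      _ = ENNReal.ofReal h * μ A := setLIntegral_const A _
      _ ≤ ENNReal.ofReal h * ENNReal.ofReal (C1 * s ^ (-q)) :=
          mul_le_mul_right (ha s ⟨hs0, hs1⟩) _
      _ ≤ ENNReal.ofReal (max C1 0 * h ^ (1 - q / 2)) := by
          rw [← ENNReal.ofReal_mul hpos.le]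
          apply ENNReal.ofReal_le_ofReal
          calc h * (C1 * s ^ (-q)) ≤ h * (max C1 0 * s ^ (-q)) :=
                mul_le_mul_of_nonneg_left
                  (mul_le_mul_of_nonneg_right (le_max_left _ _)
                    (Real.rpow_nonneg hs0.le _)) hpos.le
            _ = max C1 0 * (h * h ^ (-(q / 2))) := by rw [hs_rpow]; ring
            _ = max C1 0 * h ^ (1 - q / 2) := by rw [hhs]
  -- pointwise bound off A
  have hBptw : ∀ ξ ∈ Aᶜ, f ξ ≤ ENNReal.ofReal (h ^ (1 - q / 2) * ‖ξ‖ ^ (-q)) := by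
    intro ξ hξ
    have ht : 1 / s < ‖ξ‖ := lt_of_not_ge hξ
    have ht1 : (1:ℝ) ≤ 1 / s := by rw [le_div_iff₀ hs0]; linarith
    have htpos : (0:ℝ) < ‖ξ‖ := lt_of_lt_of_le (lt_of_lt_of_le one_pos ht1) ht.le
    apply ENNReal.ofReal_le_ofReal
    have step1 : (1 - Real.exp (-h * ‖ξ‖ ^ 2)) / ‖ξ‖ ^ 2 ≤ 1 / ‖ξ‖ ^ 2 := by
      have hxp : (0:ℝ) < ‖ξ‖ ^ 2 := by positivity
      apply div_le_div_of_nonneg_right ?_ hxp.le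
      linarith [(Real.exp_pos (-h * ‖ξ‖ ^ 2)).le]
    have hinv : (1:ℝ) / ‖ξ‖ ^ 2 = ‖ξ‖ ^ (-q) * ‖ξ‖ ^ (q - 2) := by
      rw [← Real.rpow_add htpos]
      rw [show -q + (q - 2) = ((-2 : ℤ) : ℝ) by push_cast; ring, Real.rpow_intCast]
      rw [zpow_neg, one_div]
      norm_cast
    have step2 : ‖ξ‖ ^ (q - 2) ≤ h ^ (1 - q / 2) := by
      have h2 : ‖ξ‖ ^ (q - 2) ≤ (1 / s) ^ (q - 2) :=
        Real.rpow_le_rpow_of_nonpos (by positivity) ht.le (by linarith)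
      refine h2.trans_eq ?_
      rw [hs_eq, one_div, ← Real.rpow_neg hpos.le, ← Real.rpow_mul hpos.le]
      congr 1
      ring
    calc (1 - Real.exp (-h * ‖ξ‖ ^ 2)) / ‖ξ‖ ^ 2 ≤ 1 / ‖ξ‖ ^ 2 := step1
      _ = ‖ξ‖ ^ (-q) * ‖ξ‖ ^ (q - 2) := hinv
      _ ≤ ‖ξ‖ ^ (-q) * h ^ (1 - q / 2) :=
          mul_le_mul_of_nonneg_left step2 (Real.rpow_nonneg htpos.le _)
      _ = h ^ (1 - q / 2) * ‖ξ‖ ^ (-q) := by ring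
  -- bound on Aᶜ
  have hB : ∫⁻ ξ in Aᶜ, f ξ ∂μ ≤ ENNReal.ofReal (max C2 0 * h ^ (1 - q / 2)) := by
    have ht1 : (1:ℝ) ≤ 1 / s := by rw [le_div_iff₀ hs0]; linarith
    have hsub : Aᶜ ⊆ {ξ : EuclideanSpace ℝ (Fin d) | 1 < ‖ξ‖} := fun ξ hξ =>
      lt_of_le_of_lt ht1 (lt_of_not_ge hξ)
    calc ∫⁻ ξ in Aᶜ, f ξ ∂μ
        ≤ ∫⁻ ξ in Aᶜ, ENNReal.ofReal (h ^ (1 - q / 2) * ‖ξ‖ ^ (-q)) ∂μ :=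
          setLIntegral_mono (by measurability) hBptw
      _ = ENNReal.ofReal (h ^ (1 - q / 2))
          * ∫⁻ ξ in Aᶜ, ENNReal.ofReal (‖ξ‖ ^ (-q)) ∂μ := by
          simp_rw [ENNReal.ofReal_mul hp0]
          exact lintegral_const_mul' _ _ ENNReal.ofReal_ne_top
      _ ≤ ENNReal.ofReal (h ^ (1 - q / 2)) * ENNReal.ofReal C2 :=
          mul_le_mul_right ((lintegral_mono_set hsub).trans hb) _
      _ ≤ ENNReal.ofReal (h ^ (1 - q / 2)) * ENNReal.ofReal (max C2 0) :=
          mul_le_mul_right (ENNReal.ofReal_le_ofReal (le_max_left _ _)) _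
      _ = ENNReal.ofReal (max C2 0 * h ^ (1 - q / 2)) := by
          rw [← ENNReal.ofReal_mul hp0, mul_comm]
  calc ∫⁻ ξ, f ξ ∂μ = ∫⁻ ξ in A, f ξ ∂μ + ∫⁻ ξ in Aᶜ, f ξ ∂μ :=
        (lintegral_add_compl f mA).symm
    _ ≤ ENNReal.ofReal (max C1 0 * h ^ (1 - q / 2))
        + ENNReal.ofReal (max C2 0 * h ^ (1 - q / 2)) := add_le_add hA hB
    _ = ENNReal.ofReal ((max C1 0 + max C2 0) * h ^ (1 - q / 2)) := by
        rw [← ENNReal.ofReal_add (by positivity) (by positivity)]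
        ring_nf
end

section
/- Let $\mu$ be a non-negative Borel measure on $\mathbb{R}^d$, $q \in (0,2)$, $T > 0$, with $\mu(\{|\xi|\le 1/h\}) \le C_1 h^{-q}$ for $h\in(0,1]$ and $\int_{\{|\xi|>1\}}|\xi|^{-q}\,\mu(d\xi) \le C_2$. Then there is a constant $C$ such that for all $h \in \mathbb{R}^d$ with $0<|h|<1$: $2\int_{\mathbb{R}^d}\big(1-\cos\langle\xi,h\rangle\big)\frac{1 - e^{-T|\xi|^2}}{|\xi|^2}\,\mu(d\xi) \le C |h|^{2-q}$. -/
open MeasureTheory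

lemma my_one_sub_cos_le (x : ℝ) : 1 - Real.cos x ≤ x ^ 2 / 2 := by
  have h := Real.sin_sq_eq_half_sub (x / 2)
  have h2 := Real.sin_sq_le_sq (x := x / 2)
  have hx : 2 * (x / 2) = x := by ring
  rw [hx] at h
  nlinarith

theorem stmt_14 (d : ℕ) (μ : Measure (EuclideanSpace ℝ (Fin d)))
    (q T C1 C2 : ℝ) (hq0 : 0 < q) (hq2 : q < 2) (hT : 0 < T)
    (ha : ∀ h ∈ Set.Ioc (0:ℝ) 1, μ {ξ | ‖ξ‖ ≤ 1 / h} ≤ ENNReal.ofReal (C1 * h ^ (-q)))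
    (hb : ∫⁻ ξ in {ξ : EuclideanSpace ℝ (Fin d) | 1 < ‖ξ‖},
      ENNReal.ofReal (‖ξ‖ ^ (-q)) ∂μ ≤ ENNReal.ofReal C2) :
    ∃ C : ℝ, ∀ z : EuclideanSpace ℝ (Fin d), 0 < ‖z‖ → ‖z‖ < 1 →
      2 * ∫⁻ ξ, ENNReal.ofReal
          ((1 - Real.cos ((inner ℝ ξ z : ℝ))) * (1 - Real.exp (-T * ‖ξ‖ ^ 2)) / ‖ξ‖ ^ 2) ∂μ
        ≤ ENNReal.ofReal (C * ‖z‖ ^ (2 - q)) := by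
  refine ⟨max C1 0 + 4 * max C2 0, fun z hz0 hz1 => ?_⟩
  set r := ‖z‖ with hr
  have hr0 : (0:ℝ) < r := hz0
  have hrq : (0:ℝ) < r ^ (2 - q) := Real.rpow_pos_of_pos hr0 _
  set f : EuclideanSpace ℝ (Fin d) → ℝ := fun ξ =>
    (1 - Real.cos ((inner ℝ ξ z : ℝ))) * (1 - Real.exp (-T * ‖ξ‖ ^ 2)) / ‖ξ‖ ^ 2 with hf
  -- basic pointwise facts
  have hfA : ∀ ξ, f ξ ≤ r ^ 2 / 2 := by
    intro ξ
    rcases eq_or_lt_of_le (norm_nonneg ξ) with h0 | h0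
    · simp [hf, ← h0]; positivity
    · rw [hf, div_le_iff₀ (by positivity)]
      have hc : 1 - Real.cos ((inner ℝ ξ z : ℝ)) ≤ ((inner ℝ ξ z : ℝ)) ^ 2 / 2 :=
        my_one_sub_cos_le _
      have hcs : |(inner ℝ ξ z : ℝ)| ≤ ‖ξ‖ * ‖z‖ := abs_real_inner_le_norm ξ z
      have hcs2 : ((inner ℝ ξ z : ℝ)) ^ 2 ≤ (‖ξ‖ * ‖z‖) ^ 2 := by
        rw [← sq_abs]; exact pow_le_pow_left₀ (abs_nonneg _) hcs 2
      have he1 : Real.exp (-T * ‖ξ‖ ^ 2) ≤ 1 := by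
        apply Real.exp_le_one_iff.2; nlinarith [sq_nonneg ‖ξ‖]
      have he0 : 0 < Real.exp (-T * ‖ξ‖ ^ 2) := Real.exp_pos _
      have hc0 : 0 ≤ 1 - Real.cos ((inner ℝ ξ z : ℝ)) := by
        nlinarith [Real.cos_le_one ((inner ℝ ξ z : ℝ))]
      nlinarith
  have hfB : ∀ ξ, f ξ ≤ 2 * r ^ (2 - q) * ‖ξ‖ ^ (-q) := by
    intro ξ
    rcases eq_or_lt_of_le (norm_nonneg ξ) with h0 | h0
    · simp [hf, ← h0]; positivity
    · have hnq : (0:ℝ) < ‖ξ‖ ^ (-q) := Real.rpow_pos_of_pos h0 _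
      rcases le_or_gt ‖ξ‖ (1 / r) with hle | hgt
      · -- small frequencies: r^2/2 ≤ 2 r^(2-q) ‖ξ‖^(-q)
        refine (hfA ξ).trans ?_
        have h1 : (1 / r) ^ (-q) ≤ ‖ξ‖ ^ (-q) := by
          apply Real.rpow_le_rpow_of_nonpos h0 hle (by linarith)
        have h2 : (1 / r) ^ (-q) = r ^ q := by
          rw [one_div, Real.inv_rpow hr0.le, Real.rpow_neg hr0.le, inv_inv]
        rw [h2] at h1
        have h3 : r ^ (2 - q) * r ^ q = r ^ 2 := by
          rw [← Real.rpow_add hr0, show 2 - q + q = ((2:ℕ):ℝ) by push_cast; ring,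
            Real.rpow_natCast]
        have h5 : 2 * r ^ (2 - q) * r ^ q ≤ 2 * r ^ (2 - q) * ‖ξ‖ ^ (-q) := by
          have hh : (0:ℝ) ≤ 2 * r ^ (2 - q) := by positivity
          exact mul_le_mul_of_nonneg_left h1 hh
        nlinarith [sq_nonneg r]
      · -- large frequencies: f ≤ 2/‖ξ‖^2 ≤ 2 r^(2-q) ‖ξ‖^(-q)
        have hstep : f ξ ≤ 2 / ‖ξ‖ ^ 2 := by
          rw [hf, div_le_div_iff₀ (by positivity) (by positivity)]
          have he1 : Real.exp (-T * ‖ξ‖ ^ 2) ≤ 1 := by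
            apply Real.exp_le_one_iff.2; nlinarith [sq_nonneg ‖ξ‖]
          have he0 : 0 < Real.exp (-T * ‖ξ‖ ^ 2) := Real.exp_pos _
          have hc0 : 0 ≤ 1 - Real.cos ((inner ℝ ξ z : ℝ)) := by
            nlinarith [Real.cos_le_one ((inner ℝ ξ z : ℝ))]
          have hc2 : 1 - Real.cos ((inner ℝ ξ z : ℝ)) ≤ 2 := by
            nlinarith [Real.neg_one_le_cos ((inner ℝ ξ z : ℝ))]
          have hprod : (1 - Real.cos ((inner ℝ ξ z : ℝ))) *
              (1 - Real.exp (-T * ‖ξ‖ ^ 2)) ≤ 2 := by nlinarith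
          nlinarith [mul_le_mul_of_nonneg_right hprod (sq_nonneg ‖ξ‖)]
        refine hstep.trans ?_
        have h1 : (1 / r) ^ (2 - q) ≤ ‖ξ‖ ^ (2 - q) :=
          Real.rpow_le_rpow (by positivity) hgt.le (by linarith)
        have h2 : (1 / r) ^ (2 - q) = (r ^ (2 - q))⁻¹ := by
          rw [one_div, Real.inv_rpow hr0.le]
        have h3 : ‖ξ‖ ^ (-q) * ‖ξ‖ ^ 2 = ‖ξ‖ ^ (2 - q) := by
          rw [← Real.rpow_natCast ‖ξ‖ 2, ← Real.rpow_add h0]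
          ring_nf
        rw [div_le_iff₀ (by positivity)]
        calc (2:ℝ) = 2 * r ^ (2-q) * (r ^ (2-q))⁻¹ := by field_simp
          _ ≤ 2 * r ^ (2-q) * ‖ξ‖ ^ (2-q) := by
              apply mul_le_mul_of_nonneg_left _ (by positivity)
              rw [← h2]; exact h1
          _ = 2 * r ^ (2-q) * ‖ξ‖ ^ (-q) * ‖ξ‖ ^ 2 := by rw [← h3]; ring
  -- split the integral
  have hA : MeasurableSet {ξ : EuclideanSpace ℝ (Fin d) | ‖ξ‖ ≤ 1 / r} :=
    measurableSet_le measurable_norm measurable_const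
  set A := {ξ : EuclideanSpace ℝ (Fin d) | ‖ξ‖ ≤ 1 / r} with hAdef
  have hsplit : ∫⁻ ξ, ENNReal.ofReal (f ξ) ∂μ
      = (∫⁻ ξ in A, ENNReal.ofReal (f ξ) ∂μ) + ∫⁻ ξ in Aᶜ, ENNReal.ofReal (f ξ) ∂μ :=
    (lintegral_add_compl _ hA).symm
  -- bound on A
  have hbA : ∫⁻ ξ in A, ENNReal.ofReal (f ξ) ∂μ
      ≤ ENNReal.ofReal (max C1 0 / 2 * r ^ (2 - q)) := by
    calc ∫⁻ ξ in A, ENNReal.ofReal (f ξ) ∂μ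
        ≤ ∫⁻ _ in A, ENNReal.ofReal (r ^ 2 / 2) ∂μ :=
          lintegral_mono fun ξ => ENNReal.ofReal_le_ofReal (hfA ξ)
      _ = ENNReal.ofReal (r ^ 2 / 2) * μ A := setLIntegral_const _ _
      _ ≤ ENNReal.ofReal (r ^ 2 / 2) * ENNReal.ofReal (C1 * r ^ (-q)) := by
          gcongr
          exact ha r ⟨hr0, hz1.le⟩
      _ ≤ ENNReal.ofReal (max C1 0 / 2 * r ^ (2 - q)) := by
          rw [← ENNReal.ofReal_mul (by positivity)]
          apply ENNReal.ofReal_le_ofReal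
          have h4 : r ^ (2:ℝ) = r ^ 2 := by
            rw [← Real.rpow_natCast r 2]; norm_num
          have h3 : r ^ (2:ℝ) * r ^ (-q) = r ^ (2 - q) := by
            rw [← Real.rpow_add hr0]; ring_nf
          have hC : C1 ≤ max C1 0 := le_max_left _ _
          have hrnq : (0:ℝ) < r ^ (-q) := Real.rpow_pos_of_pos hr0 _
          calc r ^ 2 / 2 * (C1 * r ^ (-q)) = C1 * (r ^ (2:ℝ) * r ^ (-q)) / 2 := by
                rw [h4]; ring
            _ = C1 * r ^ (2 - q) / 2 := by rw [h3]
            _ ≤ max C1 0 / 2 * r ^ (2 - q) := by nlinarith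
  -- bound on Aᶜ
  have hsub : Aᶜ ⊆ {ξ : EuclideanSpace ℝ (Fin d) | 1 < ‖ξ‖} := by
    intro ξ hξ
    simp only [hAdef, Set.mem_compl_iff, Set.mem_setOf_eq, not_le] at hξ ⊢
    have : (1:ℝ) < 1 / r := by rw [lt_div_iff₀ hr0]; linarith
    linarith
  have hbB : ∫⁻ ξ in Aᶜ, ENNReal.ofReal (f ξ) ∂μ
      ≤ ENNReal.ofReal (2 * max C2 0 * r ^ (2 - q)) := by
    calc ∫⁻ ξ in Aᶜ, ENNReal.ofReal (f ξ) ∂μ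
        ≤ ∫⁻ ξ in Aᶜ, ENNReal.ofReal (2 * r ^ (2 - q)) * ENNReal.ofReal (‖ξ‖ ^ (-q)) ∂μ := by
          refine lintegral_mono fun ξ => ?_
          exact le_trans (ENNReal.ofReal_le_ofReal (hfB ξ))
            (le_of_eq (ENNReal.ofReal_mul (by positivity)))
      _ = ENNReal.ofReal (2 * r ^ (2 - q)) * ∫⁻ ξ in Aᶜ, ENNReal.ofReal (‖ξ‖ ^ (-q)) ∂μ :=
          lintegral_const_mul' _ _ ENNReal.ofReal_ne_top
      _ ≤ ENNReal.ofReal (2 * r ^ (2 - q)) *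
          ∫⁻ ξ in {ξ : EuclideanSpace ℝ (Fin d) | 1 < ‖ξ‖}, ENNReal.ofReal (‖ξ‖ ^ (-q)) ∂μ := by
          gcongr
      _ ≤ ENNReal.ofReal (2 * r ^ (2 - q)) * ENNReal.ofReal C2 := by gcongr
      _ ≤ ENNReal.ofReal (2 * max C2 0 * r ^ (2 - q)) := by
          rw [← ENNReal.ofReal_mul (by positivity)]
          apply ENNReal.ofReal_le_ofReal
          have hC : C2 ≤ max C2 0 := le_max_left _ _
          nlinarith
  -- combine
  calc 2 * ∫⁻ ξ, ENNReal.ofReal (f ξ) ∂μ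
      ≤ 2 * (ENNReal.ofReal (max C1 0 / 2 * r ^ (2 - q)) +
          ENNReal.ofReal (2 * max C2 0 * r ^ (2 - q))) := by
        rw [hsplit]; gcongr
    _ = ENNReal.ofReal 2 * ENNReal.ofReal (max C1 0 / 2 * r ^ (2 - q) +
          2 * max C2 0 * r ^ (2 - q)) := by
        rw [ENNReal.ofReal_add (by positivity) (by positivity), ENNReal.ofReal_ofNat]
    _ = ENNReal.ofReal (2 * (max C1 0 / 2 * r ^ (2 - q) + 2 * max C2 0 * r ^ (2 - q))) := by
        rw [← ENNReal.ofReal_mul (by norm_num)]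
    _ = ENNReal.ofReal ((max C1 0 + 4 * max C2 0) * r ^ (2 - q)) := by ring_nf
end

section
/- Let $\mu$ be a non-negative Borel measure on $\mathbb{R}^d$, $q\in(0,2)$, with $\mu(\{|\xi|\le 1/h\}) \le C_1 h^{-q}$ for $h\in(0,1]$ and $\int_{\{|\xi|>1\}}|\xi|^{-q}\,\mu(d\xi) \le C_2$. Then there is $C>0$ such that for all $h\in(0,1]$: $\int_{\mathbb{R}^d} \frac{\min(1, h|\xi|)^2}{|\xi|^2}\,\mu(d\xi) \le C h^{2-q}$. -/
open MeasureTheory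

theorem stmt_16 (d : ℕ) (μ : Measure (EuclideanSpace ℝ (Fin d)))
    (q C1 C2 : ℝ) (hq0 : 0 < q) (hq2 : q < 2)
    (ha : ∀ h ∈ Set.Ioc (0:ℝ) 1, μ {ξ | ‖ξ‖ ≤ 1 / h} ≤ ENNReal.ofReal (C1 * h ^ (-q)))
    (hb : ∫⁻ ξ in {ξ : EuclideanSpace ℝ (Fin d) | 1 < ‖ξ‖},
      ENNReal.ofReal (‖ξ‖ ^ (-q)) ∂μ ≤ ENNReal.ofReal C2) :
    ∃ C > (0:ℝ), ∀ h ∈ Set.Ioc (0:ℝ) 1,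
      (∫⁻ ξ, ENNReal.ofReal ((min 1 (h * ‖ξ‖)) ^ 2 / ‖ξ‖ ^ 2) ∂μ)
        ≤ ENNReal.ofReal (C * h ^ (2 - q)) := by
  refine ⟨max C1 0 + max C2 0 + 1, by positivity, fun h hh => ?_⟩
  obtain ⟨hh0, hh1⟩ := hh
  set s : Set (EuclideanSpace ℝ (Fin d)) := {ξ | ‖ξ‖ ≤ 1 / h} with hsdef
  have hsm : MeasurableSet s := measurableSet_le measurable_norm measurable_const
  have hpow : (0:ℝ) < h ^ (2 - q) := Real.rpow_pos_of_pos hh0 _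
  have hpowsplit : h ^ (2 - q) = h ^ (2:ℕ) * h ^ (-q) := by
    rw [← Real.rpow_natCast h 2, ← Real.rpow_add hh0, sub_eq_add_neg]; norm_num
  rw [← lintegral_add_compl (fun ξ => ENNReal.ofReal ((min 1 (h * ‖ξ‖)) ^ 2 / ‖ξ‖ ^ 2))
    hsm (μ := μ)]
  have h1 : ∫⁻ ξ in s, ENNReal.ofReal ((min 1 (h * ‖ξ‖)) ^ 2 / ‖ξ‖ ^ 2) ∂μ
      ≤ ENNReal.ofReal (max C1 0 * h ^ (2 - q)) := by
    calc ∫⁻ ξ in s, ENNReal.ofReal ((min 1 (h * ‖ξ‖)) ^ 2 / ‖ξ‖ ^ 2) ∂μ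
        ≤ ∫⁻ _ in s, ENNReal.ofReal (h ^ 2) ∂μ := by
          refine setLIntegral_mono' hsm fun ξ _ => ?_
          apply ENNReal.ofReal_le_ofReal
          rcases eq_or_lt_of_le (norm_nonneg ξ) with h0 | h0
          · rw [← h0]
            simp
            positivity
          · rw [div_le_iff₀ (by positivity)]
            have hmin0 : (0:ℝ) ≤ min 1 (h * ‖ξ‖) :=
              le_min zero_le_one (by positivity)
            have hminle : min 1 (h * ‖ξ‖) ≤ h * ‖ξ‖ := min_le_right _ _
            nlinarith
      _ = ENNReal.ofReal (h ^ 2) * μ s := setLIntegral_const s _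
      _ ≤ ENNReal.ofReal (h ^ 2) * ENNReal.ofReal (C1 * h ^ (-q)) :=
          mul_le_mul_right (ha h ⟨hh0, hh1⟩) _
      _ ≤ ENNReal.ofReal (max C1 0 * h ^ (2 - q)) := by
          rw [← ENNReal.ofReal_mul (by positivity)]
          apply ENNReal.ofReal_le_ofReal
          have h2 : (0:ℝ) < h ^ (-q) := Real.rpow_pos_of_pos hh0 _
          have h3 : C1 ≤ max C1 0 := le_max_left _ _
          rw [hpowsplit]
          nlinarith [sq_nonneg h, pow_pos hh0 2]
  have h2 : ∫⁻ ξ in sᶜ, ENNReal.ofReal ((min 1 (h * ‖ξ‖)) ^ 2 / ‖ξ‖ ^ 2) ∂μ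
      ≤ ENNReal.ofReal (max C2 0 * h ^ (2 - q)) := by
    have hone : (1:ℝ) ≤ 1 / h := by
      rw [le_div_iff₀ hh0]; linarith
    calc ∫⁻ ξ in sᶜ, ENNReal.ofReal ((min 1 (h * ‖ξ‖)) ^ 2 / ‖ξ‖ ^ 2) ∂μ
        ≤ ∫⁻ ξ in sᶜ, ENNReal.ofReal (h ^ (2 - q)) * ENNReal.ofReal (‖ξ‖ ^ (-q)) ∂μ := by
          refine setLIntegral_mono' hsm.compl fun ξ hξ => ?_
          have hξ' : 1 / h < ‖ξ‖ := not_le.mp hξ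
          have hξ1 : (1:ℝ) < ‖ξ‖ := lt_of_le_of_lt hone hξ'
          have hξ0 : (0:ℝ) < ‖ξ‖ := lt_trans one_pos hξ1
          rw [← ENNReal.ofReal_mul hpow.le]
          apply ENNReal.ofReal_le_ofReal
          have hmin0 : (0:ℝ) ≤ min 1 (h * ‖ξ‖) := le_min zero_le_one (by positivity)
          have hminle : min 1 (h * ‖ξ‖) ≤ 1 := min_le_left _ _
          have step1 : (min 1 (h * ‖ξ‖)) ^ 2 / ‖ξ‖ ^ 2 ≤ 1 / ‖ξ‖ ^ 2 := by
            apply div_le_div_of_nonneg_right ?_ (by positivity) |>.trans_eq rfl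
            nlinarith
          have key : (1:ℝ) / ‖ξ‖ ^ 2 = ‖ξ‖ ^ (q - 2) * ‖ξ‖ ^ (-q) := by
            rw [← Real.rpow_add hξ0, show q - 2 + -q = -(2:ℝ) by ring,
              Real.rpow_neg hξ0.le, one_div, ← Real.rpow_natCast ‖ξ‖ 2]
            norm_num
          have hexp : ‖ξ‖ ^ (q - 2) ≤ (1 / h) ^ (q - 2) :=
            Real.rpow_le_rpow_of_nonpos (by positivity) hξ'.le (by linarith)
          have hinv : (1 / h) ^ (q - 2) = h ^ (2 - q) := by
            rw [one_div, ← Real.rpow_neg_one h, ← Real.rpow_mul hh0.le]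
            congr 1; ring
          have hr0 : (0:ℝ) ≤ ‖ξ‖ ^ (-q) := Real.rpow_nonneg hξ0.le _
          calc (min 1 (h * ‖ξ‖)) ^ 2 / ‖ξ‖ ^ 2 ≤ 1 / ‖ξ‖ ^ 2 := step1
            _ = ‖ξ‖ ^ (q - 2) * ‖ξ‖ ^ (-q) := key
            _ ≤ h ^ (2 - q) * ‖ξ‖ ^ (-q) := by
                apply mul_le_mul_of_nonneg_right _ hr0
                rw [← hinv]; exact hexp
      _ = ENNReal.ofReal (h ^ (2 - q)) *
            ∫⁻ ξ in sᶜ, ENNReal.ofReal (‖ξ‖ ^ (-q)) ∂μ :=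
          lintegral_const_mul' _ _ ENNReal.ofReal_ne_top
      _ ≤ ENNReal.ofReal (h ^ (2 - q)) *
            ∫⁻ ξ in {ξ : EuclideanSpace ℝ (Fin d) | 1 < ‖ξ‖},
              ENNReal.ofReal (‖ξ‖ ^ (-q)) ∂μ := by
          apply mul_le_mul_right
          apply lintegral_mono_set
          intro ξ hξ
          exact lt_of_le_of_lt hone (not_le.mp hξ)
      _ ≤ ENNReal.ofReal (h ^ (2 - q)) * ENNReal.ofReal C2 := mul_le_mul_right hb _
      _ ≤ ENNReal.ofReal (max C2 0 * h ^ (2 - q)) := by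
          rw [← ENNReal.ofReal_mul hpow.le]
          apply ENNReal.ofReal_le_ofReal
          have : C2 ≤ max C2 0 := le_max_left _ _
          nlinarith
  calc _ ≤ ENNReal.ofReal (max C1 0 * h ^ (2 - q)) + ENNReal.ofReal (max C2 0 * h ^ (2 - q)) :=
        add_le_add h1 h2
    _ ≤ ENNReal.ofReal ((max C1 0 + max C2 0 + 1) * h ^ (2 - q)) := by
        rw [← ENNReal.ofReal_add (by positivity) (by positivity)]
        apply ENNReal.ofReal_le_ofReal
        nlinarith [le_max_right C1 0, le_max_right C2 0]
end
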